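/- arXiv:1509.02086 — 2 statements merged into one kernel-verified Lean document; each statement's English description precedes it below -/
import Mathlib

section
/- Let Ṽ : ℝ≥0^ν → ℝ≥0 and V̂ : ℝⁿ → ℝ≥0 be locally Lipschitz with Ṽ(r) = V̂(Γr) for all r ∈ ℝ≥0^ν, and assume ker Γ contains a strictly positive vector (assumption AG). Suppose that for every admissible kinetics R ∈ K_A and every x ∈ ℝ≥0ⁿ, the function x ↦ Ṽ(R(x)) has nonpositive upper Dini derivative along the vector field x ↦ ΓR(x). Then for every admissible R ∈ K_A, every equilibrium x_e of R (ΓR(x_e) = 0), and every x in the class C_{x_e} = ({x_e} + im Γ) ∩ ℝ≥0ⁿ, the function x ↦ V̂(x − x_e) also has nonpositive upper Dini derivative along x ↦ ΓR(x). -/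
open Filter Set Topology

/-- Partial derivative ∂R_j/∂x_i at x. -/
noncomputable def pd {n ν : ℕ} (R : (Fin n → ℝ) → Fin ν → ℝ)
    (x : Fin n → ℝ) (j : Fin ν) (i : Fin n) : ℝ :=
  fderiv ℝ (fun y => R y j) x (Pi.single i 1)

/-- Admissible kinetics (A1)-(A4) for a reactant matrix `A`. -/
structure IsAdmissible {n ν : ℕ} (A : Matrix (Fin n) (Fin ν) ℕ)
    (R : (Fin n → ℝ) → Fin ν → ℝ) : Prop where
  smooth : ContDiff ℝ 1 R
  nonneg : ∀ x, (∀ i, 0 ≤ x i) → ∀ j, 0 ≤ R x j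
  vanish : ∀ x, (∀ i, 0 ≤ x i) → ∀ i j, 0 < A i j → x i = 0 → R x j = 0
  deriv_nonneg : ∀ x, (∀ i, 0 ≤ x i) → ∀ i j, 0 < A i j → 0 ≤ pd R x j i
  deriv_zero : ∀ x, (∀ i, 0 ≤ x i) → ∀ i j, A i j = 0 → pd R x j i = 0
  deriv_pos : ∀ x, (∀ i, 0 < x i) → ∀ i j, 0 < A i j → 0 < pd R x j i

/-- Upper (right) Dini derivative of `V` along the vector field `f` at `x`,
`D⁺V(x) = limsup_{h→0⁺} (V(x + h f(x)) − V(x))/h`. -/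
noncomputable def dini {m : ℕ} (V : (Fin m → ℝ) → ℝ)
    (f : (Fin m → ℝ) → (Fin m → ℝ)) (x : Fin m → ℝ) : ℝ :=
  Filter.limsup (fun h : ℝ => (V (x + h • f x) - V x) / h) (nhdsWithin 0 (Set.Ioi 0))

/-- The rank-one matrix `Γ^ℓ = e_j γ_iᵀ ∈ ℝ^{ν×ν}`. -/
noncomputable def GammaEll {n ν : ℕ} (Γ : Matrix (Fin n) (Fin ν) ℝ) (i : Fin n) (j : Fin ν) :
    Matrix (Fin ν) (Fin ν) ℝ :=
  Matrix.vecMulVec (Pi.single j 1) (fun k => Γ i k)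

/-!
Write `d = x - xe = Γ r` with `r > 0`, possible by (AG), and `w = R x - R xe`, so that
`Γ R(x) = Γ w`. By the mean value theorem `w_j = ∑ᵢ m_ji d_i` with `m ≥ 0` supported on the
reactants of reaction `j`, and such chords are limits of directional derivatives `u`, along `d`,
of mass-action kinetics `Q` with `Q z = r` at a positive point `z`. Since `Γ Q(z) = d`, the Dini
derivative of `Ṽ ∘ Q = V̂ ∘ Γ Q` at `z` is the upper slope of `V̂` at `d` along the curve
`h ↦ Γ Q(z + h d)`, whose velocity `Γ u` is close to `Γ w`. As `V̂` is `K`-Lipschitz near `d`, this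
slope differs by at most `K ‖Γ w - Γ u‖` from the upper slope of `V̂` along `h ↦ d + h Γ w`,
which is the Dini derivative of `V̂ (· - xe)` at `x`.
-/

open Matrix

theorem Matrix.exists_pos_mulVec_eq {m ι : Type*} [Fintype ι] {Γ : Matrix m ι ℝ}
    (hΓ : ∃ v : ι → ℝ, (∀ j, 0 < v j) ∧ Γ *ᵥ v = 0) (r₀ : ι → ℝ) :
    ∃ r : ι → ℝ, (∀ j, 0 < r j) ∧ Γ *ᵥ r = Γ *ᵥ r₀ := by
  obtain ⟨v, hv, hΓv⟩ := hΓ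
  have : ∀ᶠ t in atTop, ∀ j, 0 < r₀ j + t * v j := eventually_all.2 fun j =>
    (tendsto_atTop_add_const_left _ _ (tendsto_id.atTop_mul_const (hv j))).eventually_gt_atTop 0
  obtain ⟨t, ht⟩ := this.exists
  exact ⟨r₀ + t • v, ht, by simp [mulVec_add, mulVec_smul, hΓv]⟩

open Finset in
theorem fderiv_apply_eq_sum_pd {n ν : ℕ} (R : (Fin n → ℝ) → Fin ν → ℝ) (p u : Fin n → ℝ)
    (j : Fin ν) : fderiv ℝ (fun y => R y j) p u = ∑ i, pd R p j i * u i := by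
  refine ((fderiv ℝ (fun y => R y j) p).toLinearMap.pi_apply_eq_sum_univ u).trans <|
    sum_congr rfl fun i _ => ?_
  have : (fun k => if i = k then (1 : ℝ) else 0) = Pi.single i 1 := by
    ext k; simp [Pi.single_apply, eq_comm]
  simp [this, pd, mul_comm]

theorem hasDerivAt_comp_add_smul {n ν : ℕ} {R : (Fin n → ℝ) → Fin ν → ℝ} {a d : Fin n → ℝ}
    {t : ℝ} (hR : DifferentiableAt ℝ R (a + t • d)) :
    HasDerivAt (fun s : ℝ => R (a + s • d)) (fun j => ∑ i, pd R (a + t • d) j i * d i) t := by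
  refine hasDerivAt_pi.2 fun j => ?_
  rw [← fderiv_apply_eq_sum_pd]
  have hline : HasDerivAt (fun s : ℝ => a + s • d) d t :=
    ((hasDerivAt_id t).smul_const d).const_add a |>.congr_deriv (one_smul ℝ d)
  exact (differentiableAt_pi.1 hR j).hasFDerivAt.comp_hasDerivAt t hline

theorem IsAdmissible.differentiable {n ν : ℕ} {A : Matrix (Fin n) (Fin ν) ℕ}
    {R : (Fin n → ℝ) → Fin ν → ℝ} (hR : IsAdmissible A R) : Differentiable ℝ R :=
  hR.smooth.differentiable one_ne_zero

theorem IsAdmissible.exists_apply_sub_eq_sum_pd {n ν : ℕ} {A : Matrix (Fin n) (Fin ν) ℕ}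
    {R : (Fin n → ℝ) → Fin ν → ℝ} (hR : IsAdmissible A R) {x xe : Fin n → ℝ}
    (hx : ∀ i, 0 ≤ x i) (hxe : ∀ i, 0 ≤ xe i) (j : Fin ν) :
    ∃ ξ : Fin n → ℝ, (∀ i, 0 ≤ ξ i) ∧ R x j - R xe j = ∑ i, pd R ξ j i * (x i - xe i) := by
  have hderiv (t : ℝ) := hasDerivAt_pi.1
    (hasDerivAt_comp_add_smul (a := xe) (d := x - xe) (t := t) (hR.differentiable _)) j
  obtain ⟨t, ⟨ht0, ht1⟩, ht⟩ := exists_hasDerivAt_eq_slope _ _ zero_lt_one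
    (continuous_pi_iff.1 (hR.differentiable.continuous.comp (by fun_prop)) j).continuousOn
    fun t _ => hderiv t
  refine ⟨xe + t • (x - xe), fun i => ?_, ?_⟩
  · have := hx i; have := hxe i
    simp only [Pi.add_apply, Pi.smul_apply, Pi.sub_apply, smul_eq_mul]
    nlinarith
  · simpa using ht.symm

def massAction {n ν : ℕ} (κ : Fin ν → ℝ) (c : Matrix (Fin n) (Fin ν) ℕ) (y : Fin n → ℝ)
    (j : Fin ν) : ℝ :=
  κ j * ∏ i, y i ^ c i j

section MassAction

open Finset

variable {n ν : ℕ} (κ : Fin ν → ℝ) (c : Matrix (Fin n) (Fin ν) ℕ)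

theorem contDiff_massAction : ContDiff ℝ 1 (massAction κ c) := by
  unfold massAction; fun_prop

theorem pd_massAction (y : Fin n → ℝ) (j : Fin ν) (i : Fin n) :
    pd (massAction κ c) y j i =
      κ j * c i j * y i ^ (c i j - 1) * ∏ i' ∈ univ.erase i, y i' ^ c i' j := by
  have hfac (i' : Fin n) : HasFDerivAt (fun z : Fin n → ℝ => z i' ^ c i' j)
      (((c i' j : ℝ) * y i' ^ (c i' j - 1)) •
        (ContinuousLinearMap.proj i' : (Fin n → ℝ) →L[ℝ] ℝ)) y := by
    exact (hasDerivAt_pow (c i' j) (y i')).comp_hasFDerivAt y (hasFDerivAt_apply i' y)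
  have hprod : HasFDerivAt (fun z => massAction κ c z j) _ y :=
    (HasFDerivAt.finsetProd (u := univ) fun i' _ => hfac i').const_mul (κ j)
  rw [pd, hprod.fderiv]
  simp [Pi.single_apply, mul_comm, mul_assoc]

theorem pd_massAction_of_ne_zero {y : Fin n → ℝ} {i : Fin n} (hy : y i ≠ 0) (j : Fin ν) :
    pd (massAction κ c) y j i = c i j * massAction κ c y j / y i := by
  rw [pd_massAction, massAction, ← mul_prod_erase univ _ (mem_univ i), eq_div_iff hy]
  rcases Nat.eq_zero_or_pos (c i j) with h | h
  · simp [h]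
  · rw [← pow_sub_one_mul h.ne']; ring

theorem isAdmissible_massAction {A : Matrix (Fin n) (Fin ν) ℕ} (hκ : ∀ j, 0 < κ j)
    (hc : ∀ i j, c i j = 0 ↔ A i j = 0) : IsAdmissible A (massAction κ c) where
  smooth := contDiff_massAction κ c
  nonneg x hx j := mul_nonneg (hκ j).le (prod_nonneg fun i _ => pow_nonneg (hx i) _)
  vanish x _ i j hA hxi := by
    rw [massAction, prod_eq_zero (mem_univ i) (by rw [hxi, zero_pow ((hc i j).not.2 hA.ne')]),
      mul_zero]
  deriv_nonneg x hx i j _ := by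
    rw [pd_massAction]
    have := hκ j
    have := prod_nonneg fun i' (_ : i' ∈ univ.erase i) => pow_nonneg (hx i') (c i' j)
    have := pow_nonneg (hx i) (c i j - 1)
    positivity
  deriv_zero x _ i j hA := by simp [pd_massAction, (hc i j).2 hA]
  deriv_pos x hx i j hA := by
    rw [pd_massAction]
    have := hκ j
    have : (0 : ℝ) < c i j := by exact_mod_cast Nat.pos_of_ne_zero ((hc i j).not.2 hA.ne')
    have := prod_pos fun i' (_ : i' ∈ univ.erase i) => pow_pos (hx i') (c i' j)
    have := pow_pos (hx i) (c i j - 1)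
    positivity

end MassAction

theorem tendsto_natFloor_mul_add_one_div_atTop {𝕜 : Type*} [Field 𝕜] [LinearOrder 𝕜]
    [IsStrictOrderedRing 𝕜] [TopologicalSpace 𝕜] [OrderTopology 𝕜] [FloorRing 𝕜] {a : 𝕜}
    (ha : 0 ≤ a) : Tendsto (fun T : 𝕜 => ((⌊a * T⌋₊ + 1 : ℕ) : 𝕜) / T) atTop (𝓝 a) := by
  have h := (tendsto_nat_floor_mul_div_atTop ha).add tendsto_inv_atTop_zero
  rw [add_zero] at h
  refine h.congr fun T => ?_
  push_cast
  rw [add_div, one_div]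

open Finset in
theorem IsAdmissible.sub_mem_closure_hasDerivAt {n ν : ℕ} {A : Matrix (Fin n) (Fin ν) ℕ}
    {R : (Fin n → ℝ) → Fin ν → ℝ} (hR : IsAdmissible A R) {x xe : Fin n → ℝ}
    (hx : ∀ i, 0 ≤ x i) (hxe : ∀ i, 0 ≤ xe i) {r : Fin ν → ℝ} (hr : ∀ j, 0 < r j) :
    R x - R xe ∈ closure {u | ∃ Q z, IsAdmissible A Q ∧ (∀ i, 0 < z i) ∧ Q z = r ∧
      HasDerivAt (fun h : ℝ => Q (z + h • (x - xe))) u 0} := by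
  choose ξ hξ hRξ using hR.exists_apply_sub_eq_sum_pd hx hxe
  set a : Fin ν → Fin n → ℝ := fun j i => pd R (ξ j) j i / r j
  have ha_nonneg (j : Fin ν) (i : Fin n) : 0 ≤ a j i := by
    rcases Nat.eq_zero_or_pos (A i j) with h | h
    · simp [a, hR.deriv_zero _ (hξ j) i j h]
    · exact div_nonneg (hR.deriv_nonneg _ (hξ j) i j h) (hr j).le
  let c (T : ℝ) : Matrix (Fin n) (Fin ν) ℕ := fun i j =>
    if A i j = 0 then 0 else ⌊a j i * T⌋₊ + 1
  let Q (T : ℝ) := massAction (fun j => r j / ∏ i, T ^ c T i j) (c T)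
  have hQ_const {T : ℝ} (hT : 0 < T) : Q T (fun _ => T) = r := by
    ext j
    have : ∏ i, T ^ c T i j ≠ 0 := prod_ne_zero_iff.2 fun i _ => pow_ne_zero _ hT.ne'
    simp [Q, massAction, this]
  have hc_div (i : Fin n) (j : Fin ν) :
      Tendsto (fun T : ℝ => (c T i j : ℝ) / T) atTop (𝓝 (a j i)) := by
    by_cases h : A i j = 0
    · simp [c, h, a, hR.deriv_zero _ (hξ j) i j h]
    · simpa [c, h] using tendsto_natFloor_mul_add_one_div_atTop (ha_nonneg j i)
  -- At `T • 1` the partial derivatives of `Q T` are `c T i j * r j / T → pd R (ξ j) j i`.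
  refine mem_closure_of_tendsto (f := fun T j => ∑ i, pd (Q T) (fun _ => T) j i * (x i - xe i))
    (b := atTop) (tendsto_pi_nhds.2 fun j => ?_) ?_
  · rw [Pi.sub_apply, hRξ j]
    refine tendsto_finsetSum _ fun i _ => ?_
    have hlim := ((hc_div i j).mul_const (r j)).mul_const (x i - xe i)
    rw [div_mul_cancel₀ _ (hr j).ne'] at hlim
    refine hlim.congr' ?_
    filter_upwards [eventually_gt_atTop 0] with T hT
    have hQj : Q T (fun _ => T) j = r j := congrFun (hQ_const hT) j
    simp only [Q] at hQj ⊢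
    rw [pd_massAction_of_ne_zero _ _ hT.ne', hQj]
    ring
  · filter_upwards [eventually_gt_atTop 0] with T hT
    have hQ : IsAdmissible A (Q T) := isAdmissible_massAction _ _
      (fun j => div_pos (hr j) (prod_pos fun i _ => pow_pos hT _))
      (fun i j => by by_cases h : A i j = 0 <;> simp [c, h])
    refine ⟨Q T, fun _ => T, hQ, fun _ => hT, hQ_const hT, ?_⟩
    simpa using hasDerivAt_comp_add_smul (a := fun _ => T) (d := x - xe) (t := 0)
      (hQ.differentiable _)

section Slope

open NNReal

variable {E : Type*} [NormedAddCommGroup E]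

theorem LipschitzOnWith.sub_le_mul_norm_sub {V : E → ℝ} {K : ℝ≥0} {s : Set E}
    (hV : LipschitzOnWith K V s) {a b : E} (ha : a ∈ s) (hb : b ∈ s) :
    V a - V b ≤ K * ‖a - b‖ := by
  simpa [Real.dist_eq, dist_eq_norm] using (le_abs_self _).trans (hV.dist_le_mul a ha b hb)

variable [NormedSpace ℝ E]

theorem HasDerivAt.eventually_norm_sub_le {γ : ℝ → E} {v : E} (hγ : HasDerivAt γ v 0)
    {η : ℝ} (hη : 0 < η) : ∀ᶠ h in 𝓝[>] (0 : ℝ), ‖γ h - γ 0‖ ≤ (‖v‖ + η) * h := by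
  filter_upwards [nhdsWithin_le_nhds (hγ.isLittleO.def hη), self_mem_nhdsWithin]
    with h hh (hpos : 0 < h)
  rw [sub_zero, Real.norm_of_nonneg hpos.le] at hh
  calc ‖γ h - γ 0‖ ≤ ‖h • v‖ + ‖γ h - γ 0 - h • v‖ := norm_le_insert' _ _
    _ ≤ ‖v‖ * h + η * h := by
      rw [norm_smul, Real.norm_of_nonneg hpos.le, mul_comm]; gcongr
    _ = (‖v‖ + η) * h := by ring

theorem LipschitzOnWith.eventually_abs_slope_le {V : E → ℝ} {K : ℝ≥0} {s : Set E}
    (hV : LipschitzOnWith K V s) {γ : ℝ → E} {v : E} (hγ : HasDerivAt γ v 0)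
    (hs : s ∈ 𝓝 (γ 0)) :
    ∀ᶠ h in 𝓝[>] (0 : ℝ), |(V (γ h) - V (γ 0)) / h| ≤ K * (‖v‖ + 1) := by
  filter_upwards [hγ.eventually_norm_sub_le one_pos,
    nhdsWithin_le_nhds (hγ.continuousAt.eventually_mem hs), self_mem_nhdsWithin]
    with h hnorm hmem (hpos : 0 < h)
  rw [abs_div, abs_of_pos hpos, div_le_iff₀ hpos, abs_le]
  have h₁ := hV.sub_le_mul_norm_sub hmem (mem_of_mem_nhds hs)
  have h₂ := hV.sub_le_mul_norm_sub (mem_of_mem_nhds hs) hmem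
  rw [norm_sub_rev] at h₂
  have h₃ : (K : ℝ) * ‖γ h - γ 0‖ ≤ K * ((‖v‖ + 1) * h) := by gcongr
  constructor <;> linarith

theorem LipschitzOnWith.limsup_slope_le_add {V : E → ℝ} {K : ℝ≥0} {s : Set E} {p : E}
    (hV : LipschitzOnWith K V s) (hs : s ∈ 𝓝 p) {γ₁ γ₂ : ℝ → E} {v₁ v₂ : E}
    (hγ₁ : HasDerivAt γ₁ v₁ 0) (hγ₂ : HasDerivAt γ₂ v₂ 0) (h₁ : γ₁ 0 = p) (h₂ : γ₂ 0 = p) :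
    limsup (fun h => (V (γ₁ h) - V p) / h) (𝓝[>] 0) ≤
      limsup (fun h => (V (γ₂ h) - V p) / h) (𝓝[>] 0) + K * ‖v₁ - v₂‖ := by
  subst h₁
  have hb₁ := hV.eventually_abs_slope_le hγ₁ hs
  have hb₂ := hV.eventually_abs_slope_le hγ₂ (h₂ ▸ hs)
  rw [h₂] at hb₂
  have hmem₁ : ∀ᶠ h in 𝓝[>] (0 : ℝ), γ₁ h ∈ s :=
    nhdsWithin_le_nhds (hγ₁.continuousAt.eventually_mem hs)
  have hmem₂ : ∀ᶠ h in 𝓝[>] (0 : ℝ), γ₂ h ∈ s :=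
    nhdsWithin_le_nhds (hγ₂.continuousAt.eventually_mem (h₂ ▸ hs))
  have hslack (η : ℝ) (hη : 0 < η) :
      limsup (fun h => (V (γ₁ h) - V (γ₁ 0)) / h) (𝓝[>] 0) ≤
        limsup (fun h => (V (γ₂ h) - V (γ₁ 0)) / h) (𝓝[>] 0) + K * (‖v₁ - v₂‖ + η) := by
    rw [← limsup_add_const _ _ _
      (isBoundedUnder_of_eventually_le (hb₂.mono fun _ h => (le_abs_self _).trans h))
      (isCoboundedUnder_le_of_eventually_le _ (hb₂.mono fun _ h => neg_le_of_abs_le h))]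
    refine limsup_le_limsup ?_
      (isCoboundedUnder_le_of_eventually_le _ (hb₁.mono fun _ h => neg_le_of_abs_le h))
      (isBoundedUnder_of_eventually_le
        (hb₂.mono fun _ h => add_le_add_left ((le_abs_self _).trans h) _))
    filter_upwards [(hγ₁.sub hγ₂).eventually_norm_sub_le hη, hmem₁, hmem₂, self_mem_nhdsWithin]
      with h hnorm hmem₁ hmem₂ (hpos : 0 < h)
    rw [Pi.sub_apply, Pi.sub_apply, h₂, sub_self, sub_zero] at hnorm
    have hlip := hV.sub_le_mul_norm_sub hmem₁ hmem₂
    have : (K : ℝ) * ‖γ₁ h - γ₂ h‖ ≤ K * ((‖v₁ - v₂‖ + η) * h) := by gcongr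
    rw [div_add' _ _ _ hpos.ne', div_le_div_iff_of_pos_right hpos]
    linarith
  refine le_of_forall_pos_le_add fun ε hε => (hslack (ε / (K + 1)) (by positivity)).trans ?_
  have : (K : ℝ) * (ε / (K + 1)) ≤ ε := by
    rw [mul_div_assoc', div_le_iff₀ (by positivity)]
    nlinarith
  linarith [mul_add (K : ℝ) ‖v₁ - v₂‖ (ε / (K + 1))]

end Slope

theorem dini_comp_eq_limsup_slope {n ν : ℕ} {Q : (Fin n → ℝ) → Fin ν → ℝ}
    (hQ : ∀ y, (∀ i, 0 ≤ y i) → ∀ j, 0 ≤ Q y j) {Γ : Matrix (Fin n) (Fin ν) ℝ}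
    {Vt : (Fin ν → ℝ) → ℝ} {Vh : (Fin n → ℝ) → ℝ}
    (hcomp : ∀ r : Fin ν → ℝ, (∀ j, 0 ≤ r j) → Vt r = Vh (Γ *ᵥ r))
    {z : Fin n → ℝ} (hz : ∀ i, 0 < z i) :
    dini (fun y => Vt (Q y)) (fun y => Γ *ᵥ Q y) z =
      limsup (fun h => (Vh (Γ *ᵥ Q (z + h • Γ *ᵥ Q z)) - Vh (Γ *ᵥ Q z)) / h) (𝓝[>] 0) := by
  have hpos : ∀ᶠ h in 𝓝 (0 : ℝ), ∀ i, 0 < (z + h • Γ *ᵥ Q z) i := eventually_all.2 fun i =>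
    (Continuous.tendsto' (by fun_prop) 0 (z i) (by simp)).eventually (lt_mem_nhds (hz i))
  refine limsup_congr ?_
  filter_upwards [nhdsWithin_le_nhds hpos] with h hh
  rw [hcomp _ (hQ _ fun i => (hh i).le), hcomp _ (hQ _ fun i => (hz i).le)]

theorem stmt4_general {n ν : ℕ} (A : Matrix (Fin n) (Fin ν) ℕ)
    (Γ : Matrix (Fin n) (Fin ν) ℝ)
    (Vt : (Fin ν → ℝ) → ℝ) (Vh : (Fin n → ℝ) → ℝ)
    (hLh : LocallyLipschitz Vh)
    (hcomp : ∀ r : Fin ν → ℝ, (∀ j, 0 ≤ r j) → Vt r = Vh (Γ.mulVec r))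
    (hAG : ∃ v : Fin ν → ℝ, (∀ j, 0 < v j) ∧ Γ.mulVec v = 0)
    (hdec : ∀ R, IsAdmissible A R → ∀ x : Fin n → ℝ, (∀ i, 0 ≤ x i) →
        dini (fun y => Vt (R y)) (fun y => Γ.mulVec (R y)) x ≤ 0) :
    ∀ R, IsAdmissible A R →
      ∀ xe : Fin n → ℝ, (∀ i, 0 ≤ xe i) → Γ.mulVec (R xe) = 0 →
        ∀ x : Fin n → ℝ, (∀ i, 0 ≤ x i) → (∃ r : Fin ν → ℝ, Γ.mulVec r = x - xe) →
          dini (fun y => Vh (y - xe)) (fun y => Γ.mulVec (R y)) x ≤ 0 := by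
  intro R hR xe hxe hRxe x hx ⟨r₀, hr₀⟩
  obtain ⟨r, hr, hΓr⟩ := exists_pos_mulVec_eq hAG r₀
  rw [hr₀] at hΓr
  obtain ⟨K, s, hs, hK⟩ := hLh (x - xe)
  refine le_of_forall_pos_le_add fun ε hε => ?_
  have hnhds : {u | K * ‖Γ *ᵥ R x - Γ *ᵥ u‖ < ε} ∈ 𝓝 (R x - R xe) :=
    (isOpen_lt (by fun_prop) continuous_const).mem_nhds (by simpa [mulVec_sub, hRxe])
  obtain ⟨u, hu, Q, z, hQ, hz, hQz, hQu⟩ :=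
    mem_closure_iff_nhds.1 (hR.sub_mem_closure_hasDerivAt hx hxe hr) _ hnhds
  have hQdec := hdec Q hQ z fun i => (hz i).le
  rw [dini_comp_eq_limsup_slope hQ.nonneg hcomp hz, hQz, hΓr] at hQdec
  have hγ₁ : HasDerivAt (fun h : ℝ => x - xe + h • Γ *ᵥ R x) (Γ *ᵥ R x) 0 := by
    simpa using ((hasDerivAt_id (0 : ℝ)).smul_const (Γ *ᵥ R x)).const_add (x - xe)
  have hγ₂ : HasDerivAt (fun h : ℝ => Γ *ᵥ Q (z + h • (x - xe))) (Γ *ᵥ u) 0 :=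
    (mulVecLin Γ).toContinuousLinearMap.hasFDerivAt.comp_hasDerivAt 0 hQu
  calc dini (fun y => Vh (y - xe)) (fun y => Γ *ᵥ R y) x
      = limsup (fun h => (Vh (x - xe + h • Γ *ᵥ R x) - Vh (x - xe)) / h) (𝓝[>] 0) := by
        simp only [dini, add_sub_right_comm]
    _ ≤ limsup (fun h => (Vh (Γ *ᵥ Q (z + h • (x - xe))) - Vh (x - xe)) / h) (𝓝[>] 0) +
          K * ‖Γ *ᵥ R x - Γ *ᵥ u‖ :=
        hK.limsup_slope_le_add hs hγ₁ hγ₂ (by simp) (by simp [hQz, hΓr])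
    _ ≤ 0 + ε := add_le_add hQdec hu.le

/-- Theorem 3.3: if `Ṽ(r) = V̂(Γr)` and `Ṽ ∘ R` is a robust Lyapunov function
(nonpositive Dini derivative along `ΓR`), then `x ↦ V̂(x − x_e)` is also nonincreasing
along trajectories in the stoichiometric class of any equilibrium `x_e`. -/
theorem stmt4 {n ν : ℕ} (A B : Matrix (Fin n) (Fin ν) ℕ)
    (Γ : Matrix (Fin n) (Fin ν) ℝ)
    (hΓ : ∀ i j, Γ i j = (B i j : ℝ) - (A i j : ℝ))
    (Vt : (Fin ν → ℝ) → ℝ) (Vh : (Fin n → ℝ) → ℝ)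
    (hLt : LocallyLipschitz Vt) (hLh : LocallyLipschitz Vh)
    (hVtnn : ∀ r : Fin ν → ℝ, (∀ j, 0 ≤ r j) → 0 ≤ Vt r)
    (hVhnn : ∀ z : Fin n → ℝ, 0 ≤ Vh z)
    (hcomp : ∀ r : Fin ν → ℝ, (∀ j, 0 ≤ r j) → Vt r = Vh (Γ.mulVec r))
    (hAG : ∃ v : Fin ν → ℝ, (∀ j, 0 < v j) ∧ Γ.mulVec v = 0)
    (hdec : ∀ R, IsAdmissible A R → ∀ x : Fin n → ℝ, (∀ i, 0 ≤ x i) →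
        dini (fun y => Vt (R y)) (fun y => Γ.mulVec (R y)) x ≤ 0) :
    ∀ R, IsAdmissible A R →
      ∀ xe : Fin n → ℝ, (∀ i, 0 ≤ xe i) → Γ.mulVec (R xe) = 0 →
        ∀ x : Fin n → ℝ, (∀ i, 0 ≤ x i) → (∃ r : Fin ν → ℝ, Γ.mulVec r = x - xe) →
          dini (fun y => Vh (y - xe)) (fun y => Γ.mulVec (R y)) x ≤ 0 :=
  stmt4_general A Γ Vt Vh hLh hcomp hAG hdec
end

section
/- Let V̂ : ℝⁿ → ℝ≥0 be locally Lipschitz and define W : ℝ^ν → ℝ≥0 by W(ξ) = V̂(Γξ). Suppose that at every ξ ∈ ℝ^ν at which W is differentiable one has ∇W(ξ)ᵀ(Γ^ℓ ξ) ≤ 0 for every ℓ = 1,…,s. Then for every admissible kinetics R ∈ K_A and every equilibrium x_e of R (ΓR(x_e) = 0), the function W is nonnegative and has nonpositive upper Dini derivative along the extent-of-reaction vector field ξ ↦ R(x_e + Γξ) at every ξ ∈ ℝ^ν with x_e + Γξ ∈ ℝ≥0ⁿ, i.e. limsup_{h→0⁺} (W(ξ + h R(x_e + Γξ)) − W(ξ))/h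 ≤ 0. -/
open Filter Set Topology

/-!
Since `Γ R(x_e) = 0`, `W(ξ + h R(x)) = W(ξ + h v)` with `v = R(x) - R(x_e)`, `x = x_e + Γ ξ`.
Integrating the Jacobian of `R` along the segment from `x_e` to `x`, which stays in the
nonnegative orthant, gives `v = ∑_ℓ c_ℓ Γ^ℓ ξ` with `c_ℓ ≥ 0` by (A3). Hence at every point `z`
near `ξ` where `W` is differentiable, `∇W(z) v ≤ ∑_ℓ c_ℓ ∇W(z) Γ^ℓ (ξ - z) = O(|z - ξ|)`.
By Rademacher's theorem and Fubini, almost every line parallel to `v` meets the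
non-differentiability set of the (locally) Lipschitz `W` in a null set; comparing with such a
nearby line shows `W(ξ + h v) - W(ξ) = O(h²)`, so the upper Dini derivative is `≤ 0`.
-/

open Matrix MeasureTheory NNReal

section Lipschitz

variable {E : Type*} [NormedAddCommGroup E] [NormedSpace ℝ E]

theorem lipschitzWith_add_smul (y v : E) : LipschitzWith ‖v‖₊ fun t : ℝ => y + t • v :=
  LipschitzWith.of_dist_le_mul fun s t => by
    rw [dist_add_left, dist_eq_norm, ← sub_smul, norm_smul, Real.dist_eq, mul_comm, coe_nnnorm,
      Real.norm_eq_abs]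

theorem LipschitzWith.sub_le_mul_of_ae_deriv_le {g : ℝ → ℝ} {K : ℝ≥0} (hg : LipschitzWith K g)
    {a b B : ℝ} (hab : a ≤ b)
    (hd : ∀ᵐ t, t ∈ Ioo a b → DifferentiableAt ℝ g t → deriv g t ≤ B) :
    g b - g a ≤ B * (b - a) := by
  have hac := (hg.lipschitzOnWith (s := uIcc a b)).absolutelyContinuousOnInterval
  have hle : ∀ᵐ t ∂volume.restrict (Icc a b), deriv g t ≤ B := by
    rw [← Measure.restrict_congr_set Ioo_ae_eq_Icc, ae_restrict_iff' measurableSet_Ioo]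
    filter_upwards [hd, hg.ae_differentiableAt_real] with t ht hgt htI using ht htI hgt
  calc g b - g a = ∫ t in a..b, deriv g t := hac.integral_deriv_eq_sub.symm
    _ ≤ ∫ _ in a..b, B :=
      intervalIntegral.integral_mono_ae_restrict hab hac.intervalIntegrable_deriv
        intervalIntegrable_const hle
    _ = B * (b - a) := by simp [mul_comm]

variable [FiniteDimensional ℝ E]

theorem LipschitzWith.ae_ae_differentiableAt_add_smul {F : Type*} [MeasurableSpace E]
    [BorelSpace E] [NormedAddCommGroup F] [NormedSpace ℝ F] [FiniteDimensional ℝ F]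
    (μ : Measure E) [μ.IsAddHaarMeasure] {K : ℝ≥0} {f : E → F} (hf : LipschitzWith K f) (v : E) :
    ∀ᵐ y ∂μ, ∀ᵐ t : ℝ, DifferentiableAt ℝ f (y + t • v) := by
  have hmeas : MeasurableSet {p : E × ℝ | DifferentiableAt ℝ f (p.1 + p.2 • v)} :=
    measurableSet_of_differentiableAt ℝ f |>.preimage (by fun_prop)
  rw [Measure.ae_ae_comm hmeas]
  refine ae_of_all _ fun t => ?_
  have := hf.ae_differentiableAt (μ := μ)
  rw [← map_add_right_eq_self μ (t • v)] at this
  exact ae_of_ae_map (by fun_prop) this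

theorem LipschitzWith.sub_le_mul_of_fderiv_le {K : ℝ≥0} {f : E → ℝ} (hf : LipschitzWith K f)
    {x v : E} {r h B : ℝ} (hh : 0 ≤ h) (hhr : h * ‖v‖ < r)
    (hB : ∀ z, dist z x < r → DifferentiableAt ℝ f z → fderiv ℝ f z v ≤ B) :
    f (x + h • v) - f x ≤ B * h := by
  borelize E
  suffices key : ∀ δ ∈ Ioo 0 (r - h * ‖v‖), f (x + h • v) - f x ≤ B * h + 2 * K * δ by
    have hlim : Tendsto (fun δ : ℝ => B * h + 2 * K * δ) (𝓝[>] 0) (𝓝 (B * h)) := by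
      have hc : Continuous fun δ : ℝ => B * h + 2 * K * δ := by fun_prop
      simpa using (hc.tendsto 0).mono_left nhdsWithin_le_nhds
    exact ge_of_tendsto hlim (by filter_upwards [Ioo_mem_nhdsGT (sub_pos.2 hhr)] using key)
  rintro δ ⟨hδ, hδr⟩
  obtain ⟨y, hyx, hy⟩ :
      ∃ y, dist y x ≤ δ ∧ ∀ᵐ t : ℝ, DifferentiableAt ℝ f (y + t • v) := by
    have : (ae (Measure.addHaar.restrict (Metric.closedBall x δ))).NeBot :=
      ae_neBot.2 (by simp [Measure.restrict_eq_zero, (Metric.measure_closedBall_pos _ x hδ).ne'])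
    exact ((ae_restrict_mem measurableSet_closedBall).and
      (ae_restrict_of_ae (hf.ae_ae_differentiableAt_add_smul Measure.addHaar v))).exists
  have hline : f (y + h • v) - f (y + (0:ℝ) • v) ≤ B * (h - 0) := by
    refine (hf.comp (lipschitzWith_add_smul y v)).sub_le_mul_of_ae_deriv_le hh ?_
    filter_upwards [hy] with t ht htI _
    have hz : dist (y + t • v) x < r := calc
      dist (y + t • v) x ≤ dist (y + t • v) y + dist y x := dist_triangle _ _ _
      _ ≤ h * ‖v‖ + δ := by
        rw [dist_self_add_left, norm_smul, Real.norm_eq_abs, abs_of_pos htI.1]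
        gcongr; exact htI.2.le
      _ < r := by linarith
    have hderiv : HasDerivAt (fun s : ℝ => y + s • v) v t := by
      simpa using ((hasDerivAt_id t).smul_const v).const_add y
    rw [(ht.hasFDerivAt.comp_hasDerivAt t hderiv).deriv]
    exact hB _ hz ht
  have hKδ : K * dist y x ≤ K * δ := by gcongr
  have h1 := hf.dist_le_mul (x + h • v) (y + h • v)
  have h2 := hf.dist_le_mul y x
  rw [dist_add_right, dist_comm x] at h1
  rw [Real.dist_eq, abs_le] at h1 h2
  simp only [zero_smul, add_zero, sub_zero] at hline
  linarith [h1.1, h2.2]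

theorem LipschitzOnWith.limsup_slope_nonpos {K : ℝ≥0} {f : E → ℝ} {x v : E} {r C : ℝ}
    (hf : LipschitzOnWith K f (Metric.ball x r)) (hr : 0 < r) (hC0 : 0 ≤ C)
    (hC : ∀ z, dist z x < r → DifferentiableAt ℝ f z → fderiv ℝ f z v ≤ C * dist z x) :
    limsup (fun h : ℝ => (f (x + h • v) - f x) / h) (𝓝[>] 0) ≤ 0 := by
  obtain ⟨g, hg, hfg⟩ := hf.extend_real
  have hv : 0 < ‖v‖ + 1 := by positivity
  have hev : ∀ᶠ h in 𝓝[>] (0 : ℝ), -(K * ‖v‖) ≤ (f (x + h • v) - f x) / h ∧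
      (f (x + h • v) - f x) / h ≤ C * (‖v‖ + 1) * h := by
    filter_upwards [Ioo_mem_nhdsGT (by positivity : 0 < r / (‖v‖ + 1))] with h ⟨hh, hhr⟩
    have hρr : h * (‖v‖ + 1) ≤ r := by rw [lt_div_iff₀ hv] at hhr; exact hhr.le
    have hmem : x + h • v ∈ Metric.ball x r := by
      rw [Metric.mem_ball, dist_self_add_left, norm_smul, Real.norm_eq_abs, abs_of_pos hh]
      nlinarith
    rw [hfg hmem, hfg (Metric.mem_ball_self hr), le_div_iff₀ hh, div_le_iff₀ hh]
    constructor
    · have := hg.dist_le_mul (x + h • v) x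
      rw [dist_self_add_left, norm_smul, Real.norm_eq_abs, abs_of_pos hh, Real.dist_eq,
        abs_le] at this
      linarith [this.1]
    · refine hg.sub_le_mul_of_fderiv_le (r := h * (‖v‖ + 1)) hh.le (by nlinarith) ?_
      intro z hz hgz
      have hzr : z ∈ Metric.ball x r := hz.trans_le hρr
      have hfg_z : f =ᶠ[𝓝 z] g := eventuallyEq_of_mem (Metric.isOpen_ball.mem_nhds hzr) hfg
      rw [← hfg_z.fderiv_eq]
      calc fderiv ℝ f z v ≤ C * dist z x := hC z hzr (hfg_z.differentiableAt_iff.2 hgz)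
        _ ≤ C * (h * (‖v‖ + 1)) := by gcongr
        _ = C * (‖v‖ + 1) * h := by ring
  have hlim : Tendsto (fun h : ℝ => C * (‖v‖ + 1) * h) (𝓝[>] 0) (𝓝 0) := by
    have hc : Continuous fun h : ℝ => C * (‖v‖ + 1) * h := by fun_prop
    simpa using (hc.tendsto 0).mono_left nhdsWithin_le_nhds
  calc limsup (fun h : ℝ => (f (x + h • v) - f x) / h) (𝓝[>] 0)
      ≤ limsup (fun h : ℝ => C * (‖v‖ + 1) * h) (𝓝[>] 0) :=
        limsup_le_limsup (hev.mono fun _ => And.right)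
          (isCoboundedUnder_le_of_eventually_le _ (hev.mono fun _ => And.left))
          hlim.isBoundedUnder_le
    _ = 0 := hlim.limsup_eq

end Lipschitz

theorem ContinuousLinearMap.apply_sum_smul_le {E ι : Type*} [NormedAddCommGroup E]
    [NormedSpace ℝ E] [Fintype ι] (L : E →L[ℝ] ℝ) {K : ℝ} (hL : ‖L‖ ≤ K) (M : ι → E →L[ℝ] E)
    {c : ι → ℝ} (hc : ∀ k, 0 ≤ c k) {x z : E} (hz : ∀ k, c k * L (M k z) ≤ 0) :
    L (∑ k, c k • M k x) ≤ K * (∑ k, c k * ‖M k‖) * dist z x := by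
  have hM (k : ι) : L (M k (x - z)) ≤ K * ‖M k‖ * dist z x := calc
    L (M k (x - z)) ≤ ‖L‖ * ‖M k (x - z)‖ := (Real.le_norm_self _).trans (L.le_opNorm _)
    _ ≤ K * (‖M k‖ * ‖x - z‖) :=
        mul_le_mul hL ((M k).le_opNorm _) (norm_nonneg _) ((norm_nonneg L).trans hL)
    _ = K * ‖M k‖ * dist z x := by rw [dist_comm, dist_eq_norm, mul_assoc]
  calc L (∑ k, c k • M k x) = ∑ k, (c k * L (M k z) + c k * L (M k (x - z))) := by
        simp [map_sum, map_sub, mul_sub]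
    _ ≤ ∑ k, c k * (K * ‖M k‖ * dist z x) :=
        Finset.sum_le_sum fun k _ => by
          nlinarith [hz k, mul_le_mul_of_nonneg_left (hM k) (hc k)]
    _ = K * (∑ k, c k * ‖M k‖) * dist z x := by
        rw [Finset.mul_sum, Finset.sum_mul]
        exact Finset.sum_congr rfl fun k _ => by ring

theorem ContDiff.sub_eq_sum_mul_integral_fderiv {ι : Type*} [Fintype ι] [DecidableEq ι]
    {g : (ι → ℝ) → ℝ} (hg : ContDiff ℝ 1 g) (x u : ι → ℝ) :
    g (x + u) - g x = ∑ i, u i * ∫ t in (0 : ℝ)..1, fderiv ℝ g (x + t • u) (Pi.single i 1) := by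
  have hderiv (t : ℝ) : HasDerivAt (fun t : ℝ => g (x + t • u)) (fderiv ℝ g (x + t • u) u) t := by
    have hline : HasDerivAt (fun t : ℝ => x + t • u) u t := by
      simpa using ((hasDerivAt_id t).smul_const u).const_add x
    exact (hg.differentiable one_ne_zero _).hasFDerivAt.comp_hasDerivAt t hline
  have hcont (w : ι → ℝ) : Continuous fun t : ℝ => fderiv ℝ g (x + t • u) w :=
    ((hg.continuous_fderiv one_ne_zero).comp (by fun_prop)).clm_apply continuous_const
  have hsplit (y : ι → ℝ) : fderiv ℝ g y u = ∑ i, u i * fderiv ℝ g y (Pi.single i 1) := by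
    conv_lhs => rw [pi_eq_sum_univ' u]
    simp [map_sum]
  calc g (x + u) - g x = ∫ t in (0 : ℝ)..1, fderiv ℝ g (x + t • u) u := by
        rw [intervalIntegral.integral_eq_sub_of_hasDerivAt (fun t _ => hderiv t)
          ((hcont u).intervalIntegrable 0 1)]
        simp
    _ = ∑ i, u i * ∫ t in (0 : ℝ)..1, fderiv ℝ g (x + t • u) (Pi.single i 1) := by
        simp_rw [hsplit, ← intervalIntegral.integral_const_mul]
        exact intervalIntegral.integral_finsetSum fun i _ =>
          ((hcont _).const_mul _).intervalIntegrable 0 1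

theorem GammaEll_mulVec {n ν : ℕ} (Γ : Matrix (Fin n) (Fin ν) ℝ) (i : Fin n) (j : Fin ν)
    (ξ : Fin ν → ℝ) : GammaEll Γ i j *ᵥ ξ = (Γ *ᵥ ξ) i • Pi.single j 1 := by
  ext k
  simp [GammaEll, mulVec, dotProduct, vecMulVec_apply, Finset.mul_sum, mul_comm, mul_left_comm,
    mul_assoc]

theorem IsAdmissible.exists_sub_eq_sum_smul_GammaEll {n ν : ℕ} {A : Matrix (Fin n) (Fin ν) ℕ}
    {R : (Fin n → ℝ) → Fin ν → ℝ} (hR : IsAdmissible A R) {Γ : Matrix (Fin n) (Fin ν) ℝ}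
    {xe : Fin n → ℝ} (hxe : ∀ i, 0 ≤ xe i) {ξ : Fin ν → ℝ} (hx : ∀ i, 0 ≤ (xe + Γ *ᵥ ξ) i) :
    ∃ c : Fin n × Fin ν → ℝ, (∀ k, 0 ≤ c k) ∧ (∀ k, A k.1 k.2 = 0 → c k = 0) ∧
      R (xe + Γ *ᵥ ξ) - R xe = ∑ k, c k • GammaEll Γ k.1 k.2 *ᵥ ξ := by
  set u := Γ *ᵥ ξ
  have hseg : ∀ t ∈ Icc (0 : ℝ) 1, ∀ i, 0 ≤ (xe + t • u) i := by
    intro t ht i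
    have : (xe + t • u) i = (1 - t) * xe i + t * (xe + u) i := by simp; ring
    rw [this]
    exact add_nonneg (mul_nonneg (by linarith [ht.2]) (hxe i)) (mul_nonneg ht.1 (hx i))
  refine ⟨fun k => ∫ t in (0 : ℝ)..1, pd R (xe + t • u) k.2 k.1, fun k => ?_, fun k hk => ?_, ?_⟩
  · refine intervalIntegral.integral_nonneg zero_le_one fun t ht => ?_
    rcases (A k.1 k.2).eq_zero_or_pos with h0 | hpos
    · exact (hR.deriv_zero _ (hseg t ht) _ _ h0).ge
    · exact hR.deriv_nonneg _ (hseg t ht) _ _ hpos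
  · refine (intervalIntegral.integral_congr fun t ht => ?_).trans intervalIntegral.integral_zero
    rw [uIcc_of_le zero_le_one] at ht
    exact hR.deriv_zero _ (hseg t ht) _ _ hk
  · ext j
    rw [Pi.sub_apply, (contDiff_pi.1 hR.smooth j).sub_eq_sum_mul_integral_fderiv,
      Finset.sum_apply, Fintype.sum_prod_type]
    simp [GammaEll_mulVec, Pi.single_apply, pd, u, mul_comm]

theorem dini_comp_mulVec_of_mulVec_eq {m m' : ℕ} (Vh : (Fin m' → ℝ) → ℝ)
    (Γ : Matrix (Fin m') (Fin m) ℝ) (f : (Fin m → ℝ) → Fin m → ℝ) {ξ w : Fin m → ℝ}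
    (hw : Γ *ᵥ f ξ = Γ *ᵥ w) :
    dini (fun ζ => Vh (Γ *ᵥ ζ)) f ξ =
      limsup (fun h : ℝ => (Vh (Γ *ᵥ (ξ + h • w)) - Vh (Γ *ᵥ ξ)) / h) (𝓝[>] 0) := by
  simp only [dini, mulVec_add, mulVec_smul, hw]

theorem stmt5_general {n ν : ℕ} (A : Matrix (Fin n) (Fin ν) ℕ)
    (Γ : Matrix (Fin n) (Fin ν) ℝ)
    (Vh : (Fin n → ℝ) → ℝ) (hLip : LocallyLipschitz Vh)
    (hVnn : ∀ z : Fin n → ℝ, 0 ≤ Vh z)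
    (hdec : ∀ ξ : Fin ν → ℝ, DifferentiableAt ℝ (fun ζ => Vh (Γ.mulVec ζ)) ξ →
      ∀ i j, 0 < A i j →
        fderiv ℝ (fun ζ => Vh (Γ.mulVec ζ)) ξ ((GammaEll Γ i j).mulVec ξ) ≤ 0) :
    ∀ R, IsAdmissible A R →
      ∀ xe : Fin n → ℝ, (∀ i, 0 ≤ xe i) → Γ.mulVec (R xe) = 0 →
        ∀ ξ : Fin ν → ℝ, (∀ i, 0 ≤ (xe + Γ.mulVec ξ) i) →
          0 ≤ Vh (Γ.mulVec ξ) ∧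
          dini (fun ζ => Vh (Γ.mulVec ζ)) (fun ζ => R (xe + Γ.mulVec ζ)) ξ ≤ 0 := by
  intro R hR xe hxe hRxe ξ hx
  refine ⟨hVnn _, ?_⟩
  obtain ⟨c, hc0, hcA, hv⟩ := hR.exists_sub_eq_sum_smul_GammaEll hxe hx
  have hw : Γ *ᵥ R (xe + Γ *ᵥ ξ) = Γ *ᵥ (R (xe + Γ *ᵥ ξ) - R xe) := by
    rw [mulVec_sub, hRxe, sub_zero]
  rw [dini_comp_mulVec_of_mulVec_eq Vh Γ _ hw, hv]
  set W : (Fin ν → ℝ) → ℝ := fun ζ => Vh (Γ *ᵥ ζ)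
  have hW : LocallyLipschitz W :=
    hLip.comp (Γ.mulVecLin.toContinuousLinearMap.lipschitz.locallyLipschitz)
  obtain ⟨K, s, hs, hK⟩ := hW ξ
  obtain ⟨r, hr, hrs⟩ := Metric.mem_nhds_iff.1 hs
  set M : Fin n × Fin ν → (Fin ν → ℝ) →L[ℝ] (Fin ν → ℝ) :=
    fun k => (GammaEll Γ k.1 k.2).mulVecLin.toContinuousLinearMap
  show limsup (fun h : ℝ => (W (ξ + h • ∑ k, c k • M k ξ) - W ξ) / h) (𝓝[>] 0) ≤ 0
  refine (hK.mono hrs).limsup_slope_nonpos (C := K * ∑ k, c k * ‖M k‖) hr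
    (mul_nonneg K.coe_nonneg (Finset.sum_nonneg fun k _ => mul_nonneg (hc0 k) (norm_nonneg _)))
    fun z hz hWz => ?_
  have hL : ‖fderiv ℝ W z‖ ≤ K :=
    norm_fderiv_le_of_lipschitzOn ℝ (Metric.isOpen_ball.mem_nhds hz) (hK.mono hrs)
  refine (fderiv ℝ W z).apply_sum_smul_le hL M hc0 fun k => ?_
  rcases (A k.1 k.2).eq_zero_or_pos with h0 | hpos
  · simp [hcA k h0]
  · exact mul_nonpos_of_nonneg_of_nonpos (hc0 k) (hdec z hWz _ _ hpos)

/-- Corollary 3.4: if `W(ξ) = V̂(Γξ)` is a common Lyapunov function for the systems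
`ξ̇ = Γ^ℓ ξ`, then `W` is nonnegative and nonincreasing along the extent-of-reaction
dynamics `ξ̇ = R(x_e + Γξ)`. -/
theorem stmt5 {n ν : ℕ} (A B : Matrix (Fin n) (Fin ν) ℕ)
    (Γ : Matrix (Fin n) (Fin ν) ℝ)
    (hΓ : ∀ i j, Γ i j = (B i j : ℝ) - (A i j : ℝ))
    (Vh : (Fin n → ℝ) → ℝ) (hLip : LocallyLipschitz Vh)
    (hVnn : ∀ z : Fin n → ℝ, 0 ≤ Vh z)
    (hdec : ∀ ξ : Fin ν → ℝ, DifferentiableAt ℝ (fun ζ => Vh (Γ.mulVec ζ)) ξ →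
      ∀ i j, 0 < A i j →
        fderiv ℝ (fun ζ => Vh (Γ.mulVec ζ)) ξ ((GammaEll Γ i j).mulVec ξ) ≤ 0) :
    ∀ R, IsAdmissible A R →
      ∀ xe : Fin n → ℝ, (∀ i, 0 ≤ xe i) → Γ.mulVec (R xe) = 0 →
        ∀ ξ : Fin ν → ℝ, (∀ i, 0 ≤ (xe + Γ.mulVec ξ) i) →
          0 ≤ Vh (Γ.mulVec ξ) ∧
          dini (fun ζ => Vh (Γ.mulVec ζ)) (fun ζ => R (xe + Γ.mulVec ζ)) ξ ≤ 0 :=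
  stmt5_general A Γ Vh hLip hVnn hdec
end
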